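/- Let ψ : Ω → ℝ be differentiable with L-Lipschitz gradient (ψ ∈ C^{1,1}(Ω)). Then there exists a constant C > 0 depending only on sup_Ω|∇ψ|, L and ζ such that for every cell K ∈ 𝒯: Σ_{σ∈Σ_K} ((ψ(x_L) − ψ(x_K))/d_σ)² m_σ d_{K,σ}/m_K ≤ |∇ψ(x_K)|² + C(h + η), where for σ = K|L ∈ Σ_K the cell L is the neighbor of K across σ. -/

import Mathlib

open scoped BigOperators ENNReal RealInnerProductSpace
open Finset MeasureTheory

namespace OTFV

noncomputable def Bact (p q : ℝ) : ℝ≥0∞ :=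
  if 0 < p then ENNReal.ofReal (q ^ 2 / (2 * p))
  else if p = 0 ∧ q = 0 then 0 else ⊤

structure Mesh (T E : Type*) where
  e1 : E → T
  e2 : E → T
  ne : ∀ σ, e1 σ ≠ e2 σ
  m : T → ℝ
  m_pos : ∀ K, 0 < m K
  mS : E → ℝ
  mS_pos : ∀ σ, 0 < mS σ
  dS : E → ℝ
  dS_pos : ∀ σ, 0 < dS σ
  d1 : E → ℝ
  d2 : E → ℝ
  d1_pos : ∀ σ, 0 < d1 σ
  d2_pos : ∀ σ, 0 < d2 σ
  d_sum : ∀ σ, d1 σ + d2 σ = dS σ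

variable {T T' E : Type*}

noncomputable def divT [Fintype E] [DecidableEq T] (M : Mesh T E) (F : E → ℝ) (K : T) : ℝ :=
  (∑ σ, ((if M.e1 σ = K then F σ else 0) + (if M.e2 σ = K then -F σ else 0)) * M.mS σ) / M.m K

noncomputable def gradS (M : Mesh T E) (a : T → ℝ) (σ : E) : ℝ :=
  (a (M.e2 σ) - a (M.e1 σ)) / M.dS σ

noncomputable def linRec (M : Mesh T E) (a : T → ℝ) (σ : E) : ℝ :=
  (M.d1 σ / M.dS σ) * a (M.e1 σ) + (M.d2 σ / M.dS σ) * a (M.e2 σ)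

def inj (p : T → T') (ρ : T' → ℝ) : T → ℝ := fun K => ρ (p K)

noncomputable def coarseM [Fintype T] [DecidableEq T'] (M : Mesh T E) (p : T → T') (K' : T') : ℝ :=
  ∑ K ∈ Finset.univ.filter (fun K => p K = K'), M.m K

noncomputable def Benergy [Fintype E] [Fintype T'] (M : Mesh T E) (p : T → T') (N : ℕ)
    (ρ : Fin (N+2) → T' → ℝ) (F : Fin (N+1) → E → ℝ) : ℝ≥0∞ :=
  if ∀ k K', 0 ≤ ρ k K' then
    ∑ k : Fin (N+1),
      ENNReal.ofReal ((1:ℝ)/(N+1)) *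
        ∑ σ, Bact (linRec M (inj p (fun K' => (ρ k.succ K' + ρ k.castSucc K') / 2)) σ) (F k σ) *
          ENNReal.ofReal (M.mS σ * M.dS σ)
  else ⊤

def ContEq [Fintype E] [DecidableEq T] (M : Mesh T E) (p : T → T') (N : ℕ)
    (ρ : Fin (N+2) → T' → ℝ) (F : Fin (N+1) → E → ℝ) : Prop :=
  ∀ (k : Fin (N+1)) (K : T),
    (ρ k.succ (p K) - ρ k.castSucc (p K)) / ((1:ℝ)/(N+1)) + divT M (F k) K = 0

def Cset [Fintype E] [DecidableEq T] (M : Mesh T E) (p : T → T') (N : ℕ)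
    (ρin ρf : T' → ℝ) : Set ((Fin (N+2) → T' → ℝ) × (Fin (N+1) → E → ℝ)) :=
  {x | x.1 0 = ρin ∧ x.1 (Fin.last (N+1)) = ρf ∧ ContEq M p N x.1 x.2}

noncomputable def Wdist2 [Fintype E] [Fintype T'] [DecidableEq T] (M : Mesh T E) (p : T → T')
    (N : ℕ) (ρin ρf : T' → ℝ) : ℝ≥0∞ :=
  2 * ⨅ (x : (Fin (N+2) → T' → ℝ) × (Fin (N+1) → E → ℝ)) (_ : x ∈ Cset M p N ρin ρf),
    Benergy M p N x.1 x.2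

/-- Euclidean space `ℝ^d`. -/
abbrev Vd (d : ℕ) := EuclideanSpace ℝ (Fin d)

/-- Geometric realization of an admissible TPFA mesh of the domain `Ω ⊂ ℝ^d`. -/
structure Geom (d : ℕ) (T E : Type*) (Ω : Set (Vd d)) extends Mesh T E where
  cell : T → Set (Vd d)
  cell_closed : ∀ K, IsClosed (cell K)
  cell_sub : ∀ K, cell K ⊆ Ω
  cell_cover : (⋃ K, cell K) = Ω
  cell_disj : ∀ K L : T, K ≠ L → interior (cell K) ∩ interior (cell L) = ∅
  cell_vol : ∀ K, volume (cell K) = ENNReal.ofReal (m K)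
  ctr : T → Vd d
  ctr_mem : ∀ K, ctr K ∈ Ω
  nrm : E → Vd d
  nrm_unit : ∀ σ, ‖nrm σ‖ = 1
  ctr_diff : ∀ σ, ctr (e2 σ) - ctr (e1 σ) = dS σ • nrm σ

/-- `d_{K,σ}` for a cell `K` incident to the edge `σ`. -/
noncomputable def sideD [DecidableEq T] (M : Mesh T E) (σ : E) (K : T) : ℝ :=
  if M.e1 σ = K then M.d1 σ else M.d2 σ

/-- Mesh regularity with constant `ζ`. -/
def Regular {d : ℕ} {Ω : Set (Vd d)} (G : Geom d T E Ω) (ζ : ℝ) : Prop :=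
  (∀ (σ : E) (K : T), (G.e1 σ = K ∨ G.e2 σ = K) →
    Metric.diam (G.cell K) ≤ ζ * G.dS σ ∧ ζ * G.dS σ ≤ ζ^2 * Metric.diam (G.cell K)) ∧
  ∀ K, Metric.infDist (G.ctr K) (G.cell K) ≤ ζ * Metric.diam (G.cell K)

/-- Asymptotic isotropy with constant `η`:
`Σ_{σ∈Σ_K} m_σ d_{K,σ} n_{K,σ} ⊗ n_{K,σ} ≤ m_K (1+η) Id` as quadratic forms. -/
def Isotropic [Fintype E] [DecidableEq T] {d : ℕ} {Ω : Set (Vd d)}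
    (G : Geom d T E Ω) (η : ℝ) : Prop :=
  ∀ (K : T) (v : Vd d),
    (∑ σ, if G.e1 σ = K ∨ G.e2 σ = K then
        G.mS σ * sideD G.toMesh σ K * (⟪G.nrm σ, v⟫ : ℝ)^2 else 0)
      ≤ G.m K * (1+η) * ‖v‖^2

/-- The maximal cell diameter `h`. -/
noncomputable def meshSize [Fintype T] [Nonempty T] {d : ℕ} {Ω : Set (Vd d)}
    (G : Geom d T E Ω) : ℝ :=
  Finset.univ.sup' Finset.univ_nonempty fun K => Metric.diam (G.cell K)

/-- The coarse cell `K'`, i.e. the union of the fine cells mapped to `K'`. -/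
def coarseCell {d : ℕ} {Ω : Set (Vd d)} (G : Geom d T E Ω) (p : T → T') (K' : T') :
    Set (Vd d) :=
  ⋃ (K : T) (_ : p K = K'), G.cell K

/-- Coarse sampling operator `Π_{𝒯'}` (cell averages). -/
noncomputable def samp [Fintype T] [DecidableEq T'] {d : ℕ} {Ω : Set (Vd d)}
    (G : Geom d T E Ω) (p : T → T') (f : Vd d → ℝ) (K' : T') : ℝ :=
  (∫ x in coarseCell G p K', f x) / coarseM G.toMesh p K'

/-- Discrete mean Poincaré inequality with constant `C_P`. -/
def DiscPoincare [Fintype T] [Fintype E] (M : Mesh T E) (CP : ℝ) : Prop :=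
  ∀ ψ : T → ℝ,
    Real.sqrt (∑ K, (ψ K - (∑ J, ψ J * M.m J) / (∑ J, M.m J))^2 * M.m K) ≤
      CP * Real.sqrt (∑ σ, (gradS M ψ σ)^2 * M.mS σ * M.dS σ)

/-- Squared weighted (by the reconstructed density `ρ`) norm of a time-dependent
edge function `G`, namely `‖G‖_ρ²`. -/
noncomputable def wnorm2 [Fintype E] (M : Mesh T E) (p : T → T') (N : ℕ)
    (ρ : Fin (N+2) → T' → ℝ) (u : Fin (N+1) → E → ℝ) : ℝ :=
  ((1:ℝ)/(N+1)) * ∑ k : Fin (N+1), ∑ σ,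
    (u k σ)^2 * linRec M (inj p (fun K' => (ρ k.succ K' + ρ k.castSucc K') / 2)) σ *
      M.mS σ * M.dS σ

end OTFV

open OTFV

/-! For an edge `σ = K|L` we have `x_L - x_K = d_σ n_{K,σ}`, so Taylor's formula with an
`L`-Lipschitz gradient makes the difference quotient `(ψ(x_L) - ψ(x_K))/d_σ` equal to
`⟪∇ψ(x_K), n_{K,σ}⟫` up to `L d_σ ≤ L ζ h`; as both are bounded by `S = sup |∇ψ|`, the square of
the quotient is at most `⟪∇ψ(x_K), n_{K,σ}⟫² + 2 S L ζ h`. Summed with the weights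
`m_σ d_{K,σ} / m_K`, isotropy bounds the main terms by `(1 + η) |∇ψ(x_K)|²` and, tested on an
orthonormal basis, the total weight by `(1 + η) d`. This gives the claim when `η ≤ 1`; when `η > 1`
the crude bound `S²` on each squared quotient already leaves an error `O(η)`. -/

section Calculus

variable {F : Type*} [NormedAddCommGroup F] [InnerProductSpace ℝ F] [CompleteSpace F]
  {Ω : Set F} {ψ : F → ℝ} {g : F → F} {x y : F}

theorem Convex.abs_sub_le_of_norm_gradient_le (hΩ : Convex ℝ Ω)
    (hg : ∀ z ∈ Ω, HasGradientWithinAt ψ (g z) Ω z) {S : ℝ} (hS : ∀ z ∈ Ω, ‖g z‖ ≤ S)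
    (hx : x ∈ Ω) (hy : y ∈ Ω) :
    |ψ y - ψ x| ≤ S * ‖y - x‖ := by
  simpa [Real.norm_eq_abs] using hΩ.norm_image_sub_le_of_norm_hasFDerivWithin_le
    (fun z hz => (hg z hz).hasFDerivWithinAt) (fun z hz => by simpa using hS z hz) hx hy

theorem Convex.abs_sub_sub_inner_le_of_lipschitzOnWith (hΩ : Convex ℝ Ω)
    (hg : ∀ z ∈ Ω, HasGradientWithinAt ψ (g z) Ω z) {ℓ : NNReal} (hlip : LipschitzOnWith ℓ g Ω)
    (hx : x ∈ Ω) (hy : y ∈ Ω) :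
    |ψ y - ψ x - ⟪g x, y - x⟫| ≤ ℓ * ‖y - x‖ ^ 2 := by
  set s := Ω ∩ Metric.closedBall x ‖y - x‖
  have hs : Convex ℝ s := hΩ.inter (convex_closedBall _ _)
  have hxs : x ∈ s := ⟨hx, Metric.mem_closedBall_self (norm_nonneg _)⟩
  have hys : y ∈ s := ⟨hy, by rw [Metric.mem_closedBall, dist_eq_norm]⟩
  have hderiv_close : ∀ z ∈ s, ‖InnerProductSpace.toDual ℝ F (g z)
      - InnerProductSpace.toDual ℝ F (g x)‖ ≤ ℓ * ‖y - x‖ := by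
    intro z hz
    rw [← map_sub, LinearIsometryEquiv.norm_map, ← dist_eq_norm]
    calc dist (g z) (g x) ≤ ℓ * dist z x := hlip.dist_le_mul z hz.1 x hx
      _ ≤ ℓ * ‖y - x‖ := mul_le_mul_of_nonneg_left hz.2 ℓ.coe_nonneg
  simpa [Real.norm_eq_abs, sq, mul_assoc] using
    hs.norm_image_sub_le_of_norm_hasFDerivWithin_le'
      (fun z hz => ((hg z hz.1).hasFDerivWithinAt).mono Set.inter_subset_left)
      hderiv_close hxs hys

theorem Convex.abs_div_sub_inner_le_of_sub_eq_smul (hΩ : Convex ℝ Ω)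
    (hg : ∀ z ∈ Ω, HasGradientWithinAt ψ (g z) Ω z) {ℓ : NNReal} (hlip : LipschitzOnWith ℓ g Ω)
    (hx : x ∈ Ω) (hy : y ∈ Ω) {d : ℝ} {n : F} (hd : 0 < d) (hn : ‖n‖ = 1)
    (hxy : y - x = d • n) :
    |(ψ y - ψ x) / d - ⟪n, g x⟫| ≤ ℓ * d := by
  have htaylor := hΩ.abs_sub_sub_inner_le_of_lipschitzOnWith hg hlip hx hy
  rw [hxy, norm_smul, hn, Real.norm_of_nonneg hd.le, mul_one, real_inner_smul_right,
    real_inner_comm] at htaylor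
  rw [show (ψ y - ψ x) / d - ⟪n, g x⟫ = (ψ y - ψ x - d * ⟪n, g x⟫) / d by field_simp,
    abs_div, abs_of_pos hd, div_le_iff₀ hd]
  linarith

theorem Convex.abs_div_sub_inner_le_of_sub_eq_smul' (hΩ : Convex ℝ Ω)
    (hg : ∀ z ∈ Ω, HasGradientWithinAt ψ (g z) Ω z) {ℓ : NNReal} (hlip : LipschitzOnWith ℓ g Ω)
    (hx : x ∈ Ω) (hy : y ∈ Ω) {d : ℝ} {n : F} (hd : 0 < d) (hn : ‖n‖ = 1)
    (hxy : y - x = d • n) :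
    |(ψ y - ψ x) / d - ⟪n, g y⟫| ≤ ℓ * d := by
  have hyx : x - y = d • -n := by rw [smul_neg, ← hxy, neg_sub]
  have := hΩ.abs_div_sub_inner_le_of_sub_eq_smul hg hlip hy hx hd (by rwa [norm_neg]) hyx
  rw [← abs_neg]
  convert this using 2
  rw [inner_neg_left]
  ring
end Calculus

theorem sq_le_sq_add_of_abs_sub_le {a t S e : ℝ} (hae : |a - t| ≤ e) (ha : |a| ≤ S)
    (ht : |t| ≤ S) : a ^ 2 ≤ t ^ 2 + 2 * S * e := by
  have hsum : |a + t| ≤ 2 * S := (abs_add_le a t).trans (by linarith)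
  have := mul_le_mul hae hsum (abs_nonneg _) ((abs_nonneg _).trans hae)
  nlinarith [le_abs_self ((a - t) * (a + t)), abs_mul (a - t) (a + t)]

theorem sum_le_mul_finrank_of_sum_inner_sq_le {F ι : Type*} [NormedAddCommGroup F]
    [InnerProductSpace ℝ F] [FiniteDimensional ℝ F] (s : Finset ι) (w : ι → ℝ) {n : ι → F}
    (hn : ∀ i ∈ s, ‖n i‖ = 1) {c : ℝ} (h : ∀ v, ∑ i ∈ s, w i * ⟪n i, v⟫ ^ 2 ≤ c * ‖v‖ ^ 2) :
    ∑ i ∈ s, w i ≤ c * Module.finrank ℝ F := by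
  set b := stdOrthonormalBasis ℝ F
  calc ∑ i ∈ s, w i = ∑ i ∈ s, w i * ∑ j, ⟪n i, b j⟫ ^ 2 :=
        Finset.sum_congr rfl fun i hi => by rw [b.sum_sq_inner_left, hn i hi, one_pow, mul_one]
    _ = ∑ j, ∑ i ∈ s, w i * ⟪n i, b j⟫ ^ 2 := by
        simp_rw [Finset.mul_sum]; exact Finset.sum_comm
    _ ≤ ∑ j, c * ‖b j‖ ^ 2 := Finset.sum_le_sum fun j _ => h (b j)
    _ = c * Module.finrank ℝ F := by simp [b.orthonormal.1, mul_comm]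

theorem sum_mul_sq_le_of_isotropic {ι : Type*} (s : Finset ι) {w a t : ι → ℝ}
    {m η V S D δ : ℝ} (hw : ∀ i ∈ s, 0 ≤ w i) (hm : 0 ≤ m) (hη : 0 ≤ η) (hV : 0 ≤ V)
    (hD : 0 ≤ D) (hδ : 0 ≤ δ) (hVS : V ≤ S ^ 2)
    (hat : ∀ i ∈ s, a i ^ 2 ≤ t i ^ 2 + δ) (haS : ∀ i ∈ s, |a i| ≤ S)
    (hwt : ∑ i ∈ s, w i * t i ^ 2 ≤ m * (1 + η) * V) (hwD : ∑ i ∈ s, w i ≤ m * (1 + η) * D) :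
    ∑ i ∈ s, w i * a i ^ 2 ≤ m * (V + (2 * D + 1) * S ^ 2 * η + 2 * D * δ) := by
  rcases le_or_gt η 1 with hη1 | hη1
  · have hsum : ∑ i ∈ s, w i * a i ^ 2 ≤ ∑ i ∈ s, w i * t i ^ 2 + δ * ∑ i ∈ s, w i := by
      rw [Finset.mul_sum, ← Finset.sum_add_distrib]
      exact Finset.sum_le_sum fun i hi => by nlinarith [hat i hi, hw i hi]
    have := mul_le_mul_of_nonneg_left hwD hδ
    nlinarith [mul_nonneg (mul_nonneg hm hδ) (mul_nonneg hD (sub_nonneg.2 hη1)),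
      mul_nonneg (mul_nonneg hm hη) (sub_nonneg.2 hVS),
      mul_nonneg (mul_nonneg hm hη) (mul_nonneg hD (sq_nonneg S))]
  · have hsum : ∑ i ∈ s, w i * a i ^ 2 ≤ S ^ 2 * ∑ i ∈ s, w i := by
      rw [Finset.mul_sum]
      exact Finset.sum_le_sum fun i hi => by nlinarith [sq_le_sq' (abs_le.1 (haS i hi)).1 (abs_le.1 (haS i hi)).2, hw i hi]
    have := mul_le_mul_of_nonneg_left hwD (sq_nonneg S)
    nlinarith [mul_nonneg (mul_nonneg hm hD) (mul_nonneg (sq_nonneg S) (sub_nonneg.2 hη1.le)),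
      mul_nonneg hm (mul_nonneg (sq_nonneg S) hη), mul_nonneg hm (mul_nonneg hD hδ)]

namespace OTFV

variable {T E : Type*} {d : ℕ} {Ω : Set (Vd d)}

theorem sideD_pos [DecidableEq T] (M : Mesh T E) (σ : E) (K : T) : 0 < sideD M σ K := by
  unfold sideD
  split
  exacts [M.d1_pos σ, M.d2_pos σ]

theorem diam_le_meshSize [Fintype T] [Nonempty T] (G : Geom d T E Ω) (K : T) :
    Metric.diam (G.cell K) ≤ meshSize G :=
  Finset.le_sup' (fun J => Metric.diam (G.cell J)) (Finset.mem_univ K)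

theorem Regular.dS_le_mul_meshSize [Fintype T] [Nonempty T] {G : Geom d T E Ω} {ζ : ℝ}
    (hreg : Regular G ζ) (hζ : 0 < ζ) {σ : E} {K : T} (hσ : G.e1 σ = K ∨ G.e2 σ = K) :
    G.dS σ ≤ ζ * meshSize G := by
  have hdiam : G.dS σ ≤ ζ * Metric.diam (G.cell K) :=
    le_of_mul_le_mul_left (by linarith [(hreg.1 σ K hσ).2]) hζ
  exact hdiam.trans (mul_le_mul_of_nonneg_left (diam_le_meshSize G K) hζ.le)

theorem Geom.norm_ctr_sub_ctr (G : Geom d T E Ω) (σ : E) :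
    ‖G.ctr (G.e2 σ) - G.ctr (G.e1 σ)‖ = G.dS σ := by
  rw [G.ctr_diff σ, norm_smul, G.nrm_unit, mul_one, Real.norm_of_nonneg (G.dS_pos σ).le]

variable {ψ : Vd d → ℝ} {g : Vd d → Vd d}

theorem Geom.abs_gradS_le (G : Geom d T E Ω) (hΩ : Convex ℝ Ω)
    (hg : ∀ x ∈ Ω, HasGradientWithinAt ψ (g x) Ω x) {S : ℝ} (hS : ∀ x ∈ Ω, ‖g x‖ ≤ S)
    (σ : E) : |gradS G.toMesh (fun J => ψ (G.ctr J)) σ| ≤ S := by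
  have hd := G.dS_pos σ
  have := hΩ.abs_sub_le_of_norm_gradient_le hg hS (G.ctr_mem (G.e1 σ)) (G.ctr_mem (G.e2 σ))
  rw [G.norm_ctr_sub_ctr] at this
  rwa [gradS, abs_div, abs_of_pos hd, div_le_iff₀ hd]

theorem Geom.abs_gradS_sub_inner_le [DecidableEq T] (G : Geom d T E Ω) (hΩ : Convex ℝ Ω)
    (hg : ∀ x ∈ Ω, HasGradientWithinAt ψ (g x) Ω x) {ℓ : NNReal} (hlip : LipschitzOnWith ℓ g Ω)
    {σ : E} {K : T} (hσ : G.e1 σ = K ∨ G.e2 σ = K) :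
    |gradS G.toMesh (fun J => ψ (G.ctr J)) σ - ⟪G.nrm σ, g (G.ctr K)⟫| ≤ ℓ * G.dS σ := by
  rcases hσ with rfl | rfl
  · exact hΩ.abs_div_sub_inner_le_of_sub_eq_smul hg hlip (G.ctr_mem _) (G.ctr_mem _)
      (G.dS_pos σ) (G.nrm_unit σ) (G.ctr_diff σ)
  · exact hΩ.abs_div_sub_inner_le_of_sub_eq_smul' hg hlip (G.ctr_mem _) (G.ctr_mem _)
      (G.dS_pos σ) (G.nrm_unit σ) (G.ctr_diff σ)

theorem Geom.gradS_sq_le_inner_sq_add [Fintype T] [Nonempty T] [DecidableEq T]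
    (G : Geom d T E Ω) (hΩ : Convex ℝ Ω) (hg : ∀ x ∈ Ω, HasGradientWithinAt ψ (g x) Ω x)
    {ℓ : NNReal} (hlip : LipschitzOnWith ℓ g Ω) {S : ℝ} (hS : ∀ x ∈ Ω, ‖g x‖ ≤ S) {ζ : ℝ}
    (hreg : Regular G ζ) (hζ : 0 < ζ) {σ : E} {K : T} (hσ : G.e1 σ = K ∨ G.e2 σ = K) :
    gradS G.toMesh (fun J => ψ (G.ctr J)) σ ^ 2
      ≤ ⟪G.nrm σ, g (G.ctr K)⟫ ^ 2 + 2 * S * (ℓ * (ζ * meshSize G)) :=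
  sq_le_sq_add_of_abs_sub_le
    ((G.abs_gradS_sub_inner_le hΩ hg hlip hσ).trans
      (mul_le_mul_of_nonneg_left (hreg.dS_le_mul_meshSize hζ hσ) ℓ.coe_nonneg))
    (G.abs_gradS_le hΩ hg hS σ)
    ((abs_real_inner_le_norm _ _).trans (by rw [G.nrm_unit, one_mul]; exact hS _ (G.ctr_mem K)))

end OTFV

theorem gradient_consistency (dim : ℕ) (S L ζ : ℝ) (hζ : 1 ≤ ζ) :
    ∃ C > 0,
      ∀ (T E : Type) [Fintype T] [Fintype E] [DecidableEq T] [Nonempty T],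
      ∀ (Ω : Set (Vd dim)), Convex ℝ Ω → IsCompact Ω →
      ∀ (G : Geom dim T E Ω) (η : ℝ), 0 ≤ η → Regular G ζ → Isotropic G η →
      ∀ (ψ : Vd dim → ℝ) (g : Vd dim → Vd dim),
        (∀ x ∈ Ω, HasGradientWithinAt ψ (g x) Ω x) →
        LipschitzOnWith (Real.toNNReal L) g Ω →
        (∀ x ∈ Ω, ‖g x‖ ≤ S) →
        ∀ K : T,
          (∑ σ, if G.e1 σ = K ∨ G.e2 σ = K then
              (gradS G.toMesh (fun J => ψ (G.ctr J)) σ)^2 * G.mS σ * sideD G.toMesh σ K / G.m K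
            else 0)
          ≤ ‖g (G.ctr K)‖^2 + C * (meshSize G + η) := by
  set ℓ : ℝ := (Real.toNNReal L : ℝ)
  refine ⟨(2 * dim + 1) * S ^ 2 + 4 * dim * |S| * ℓ * ζ + 1, by positivity, ?_⟩
  intro T E _ _ _ _ Ω hΩ _ G η hη hreg hiso ψ g hg hlip hS K
  set s := univ.filter fun σ => G.e1 σ = K ∨ G.e2 σ = K
  set a := gradS G.toMesh (fun J => ψ (G.ctr J))
  set v := g (G.ctr K)
  set h := meshSize G
  have hv : ‖v‖ ≤ S := hS _ (G.ctr_mem K)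
  have hS0 : 0 ≤ S := (norm_nonneg _).trans hv
  have hh : 0 ≤ h := Metric.diam_nonneg.trans (diam_le_meshSize G K)
  have hiso_K : ∀ u, ∑ σ ∈ s, G.mS σ * sideD G.toMesh σ K * ⟪G.nrm σ, u⟫ ^ 2
      ≤ G.m K * (1 + η) * ‖u‖ ^ 2 := fun u => by rw [Finset.sum_filter]; exact hiso K u
  have hweights := sum_le_mul_finrank_of_sum_inner_sq_le s _ (fun σ _ => G.nrm_unit σ) hiso_K
  rw [finrank_euclideanSpace_fin] at hweights
  have ha_sq : ∀ σ ∈ s, a σ ^ 2 ≤ ⟪G.nrm σ, v⟫ ^ 2 + 2 * S * (ℓ * (ζ * h)) := fun σ hσ =>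
    G.gradS_sq_le_inner_sq_add hΩ hg hlip hS hreg (by linarith) (Finset.mem_filter.1 hσ).2
  have hsum := sum_mul_sq_le_of_isotropic s (fun σ _ => (mul_pos (G.mS_pos σ)
    (sideD_pos G.toMesh σ K)).le) (G.m_pos K).le hη (sq_nonneg ‖v‖) (Nat.cast_nonneg dim)
    (by positivity) (pow_le_pow_left₀ (norm_nonneg v) hv 2) ha_sq
    (fun σ _ => G.abs_gradS_le hΩ hg hS σ) (hiso_K v) hweights
  rw [← Finset.sum_filter, ← Finset.sum_div, div_le_iff₀ (G.m_pos K), abs_of_nonneg hS0]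
  calc ∑ σ ∈ s, a σ ^ 2 * G.mS σ * sideD G.toMesh σ K
      = ∑ σ ∈ s, G.mS σ * sideD G.toMesh σ K * a σ ^ 2 :=
        Finset.sum_congr rfl fun σ _ => by ring
    _ ≤ _ := hsum
    _ ≤ (‖v‖ ^ 2 + ((2 * dim + 1) * S ^ 2 + 4 * dim * S * ℓ * ζ + 1) * (h + η)) * G.m K := by
        rw [mul_comm]
        refine mul_le_mul_of_nonneg_right ?_ (G.m_pos K).le
        have : 0 ≤ ((2 * dim + 1) * S ^ 2 + 1) * h + 4 * dim * S * ℓ * ζ * η + η := by positivity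
        linear_combination this
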